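/- Let T > 0, let V₁,…,V_p : ℝⁿ × ℝ → ℝ be continuously differentiable, fix r ∈ {1,…,p}, and define the pivot h̃(y, τ) := max^{(r)}(V₁(y,τ),…,V_p(y,τ)) (the r-th largest value). Let α : ℝ → ℝ be extended class-K and locally Lipschitz, let θ : [0,T] → [0,∞) be continuous, let ρ : ℝ → ℝ be continuous and positive definite, and let τ₂ : [0,T] → ℝ be differentiable. Let x : [0,T] → ℝⁿ be a differentiable curve such that for every j ∈ {1,…,p} and every t ∈ [0,T]: (d/dt)[V_j(x(t), τ₂(t))] ≥ −α(V_j(x(t), τ₂(t))) − θ(t)·ρ(V_j(x(t), τ₂(t)) − h̃(x(t), τ₂(t))). If at least r of the values V₁(x(0), τ₂(0)),…,V_p(x(0), τ₂(0)) are nonnegative, then for every t ∈ [0,T] at least r of the values V₁(x(t), τ₂(t)),…,V_p(x(t), τ₂(t)) are nonnegative. -/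

import Mathlib

/-- The `r`-th largest value among `w 0, …, w (p-1)`: the maximum over all subsets
`S ⊆ Fin p` with `|S| = r` of `min_{j ∈ S} w j`. -/
noncomputable def rthMax {p : ℕ} (r : ℕ) (w : Fin p → ℝ) : ℝ :=
  sSup {m : ℝ | ∃ S : Finset (Fin p), S.card = r ∧ m = sInf (w '' ↑S)}

/-- An extended class-K function: continuous, strictly increasing, vanishing at `0`. -/
def IsClassKe (α : ℝ → ℝ) : Prop :=
  Continuous α ∧ StrictMono α ∧ α 0 = 0

/-- A positive definite function: nonnegative, vanishing exactly at `0`. -/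
def IsPosDef (ρ : ℝ → ℝ) : Prop :=
  (∀ s : ℝ, 0 ≤ ρ s) ∧ ρ 0 = 0 ∧ ∀ s : ℝ, s ≠ 0 → 0 < ρ s

/-! The pivot `h t = max^{(r)}_j V_j (x t, τ₂ t)` is continuous, since the `r`-th largest value
is `1`-Lipschitz for the sup norm, and near any time `s` it coincides with some `V_j` that already
equals the pivot at `s`. On such a `V_j` the penalty `θ ρ (V_j - h)` vanishes, so the lower right
Dini derivative of `h` at `s` is at least `-α (h s)`, which is positive where `h` is negative.
Hence `h` cannot leave `[0, ∞)`, and `0 ≤ h t` says exactly that at least `r` values are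
nonnegative. -/

open Filter Topology Set

lemma nonneg_of_liminf_slope_right_ge_neg {h α : ℝ → ℝ} {a b : ℝ} (hα : ∀ y < 0, α y < 0)
    (hh : ContinuousOn h (Icc a b)) (ha : 0 ≤ h a)
    (hslope : ∀ s ∈ Ico a b, ∀ c < -α (h s), ∀ᶠ z in 𝓝[>] s, c < slope h s z) :
    ∀ t ∈ Icc a b, 0 ≤ h t := by
  intro t ht
  -- Fence `-h` by the constant `ε`: at a contact point `h s = -ε < 0`, so `α (h s) < 0`.
  have hfence : ∀ ε > 0, -h t ≤ ε := by
    intro ε hε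
    refine image_le_of_liminf_slope_right_lt_deriv_boundary (f' := fun s => α (h s)) hh.neg ?_
      (by simp only [Pi.neg_apply]; linarith) (fun _ => hasDerivAt_const _ ε) ?_ ht
    · intro s hs c hc
      refine ((hslope s hs (-c) (by linarith)).mono fun z hz => ?_).frequently
      rw [Pi.neg_def, slope_neg]
      linarith
    · intro s _ hcontact
      exact hα _ (by simp only [Pi.neg_apply] at hcontact; linarith)
  exact neg_nonpos.mp (le_of_forall_pos_le_add fun ε hε => by simpa using hfence ε hε)

section rthMax

variable {p r : ℕ}

lemma finite_rthMax_candidates (w : Fin p → ℝ) :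
    {m : ℝ | ∃ S : Finset (Fin p), S.card = r ∧ m = sInf (w '' S)}.Finite :=
  (finite_range fun S : Finset (Fin p) => sInf (w '' S)).subset fun _ ⟨S, _, hm⟩ => ⟨S, hm.symm⟩

lemma exists_card_eq_rthMax_eq_sInf (hr : 1 ≤ r) (hrp : r ≤ p) (w : Fin p → ℝ) :
    ∃ S : Finset (Fin p), S.card = r ∧ S.Nonempty ∧ rthMax r w = sInf (w '' S) := by
  obtain ⟨S, -, hS⟩ := Finset.exists_subset_card_eq (s := (Finset.univ : Finset (Fin p))) (n := r)
    (by simpa using hrp)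
  have hne : {m : ℝ | ∃ S : Finset (Fin p), S.card = r ∧ m = sInf (w '' S)}.Nonempty :=
    ⟨_, S, hS, rfl⟩
  obtain ⟨S', hS', hmax⟩ := hne.csSup_mem (finite_rthMax_candidates w)
  exact ⟨S', hS', Finset.card_pos.mp (by omega), hmax⟩

lemma le_rthMax_iff (hr : 1 ≤ r) (hrp : r ≤ p) (w : Fin p → ℝ) {v : ℝ} :
    v ≤ rthMax r w ↔ r ≤ (Finset.univ.filter fun j => v ≤ w j).card := by
  constructor
  · intro hv
    obtain ⟨S, hS, -, hmax⟩ := exists_card_eq_rthMax_eq_sInf hr hrp w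
    refine hS.symm.le.trans (Finset.card_le_card fun j hj => ?_)
    simpa using hv.trans (hmax ▸ csInf_le (S.finite_toSet.image w).bddBelow (mem_image_of_mem w hj))
  · intro hcard
    obtain ⟨S, hSsub, hS⟩ := Finset.exists_subset_card_eq hcard
    have hne : (w '' S).Nonempty :=
      (Finset.coe_nonempty.mpr (Finset.card_pos.mp (by omega))).image w
    have hle : v ≤ sInf (w '' S) := le_csInf hne (by
      rintro _ ⟨j, hj, rfl⟩
      simpa using hSsub hj)
    exact hle.trans (le_csSup (finite_rthMax_candidates w).bddAbove ⟨S, hS, rfl⟩)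

lemma exists_eq_rthMax (hr : 1 ≤ r) (hrp : r ≤ p) (w : Fin p → ℝ) : ∃ j, w j = rthMax r w := by
  obtain ⟨S, -, hS, hmax⟩ := exists_card_eq_rthMax_eq_sInf hr hrp w
  obtain ⟨j, -, hj⟩ := ((Finset.coe_nonempty.mpr hS).image w).csInf_mem (S.finite_toSet.image w)
  exact ⟨j, hj.trans hmax.symm⟩

lemma lipschitzWith_rthMax (hr : 1 ≤ r) (hrp : r ≤ p) :
    LipschitzWith 1 (rthMax (p := p) r) := by
  refine LipschitzWith.of_le_add fun w w' => ?_
  rw [← sub_le_iff_le_add, le_rthMax_iff hr hrp]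
  refine ((le_rthMax_iff hr hrp w).mp le_rfl).trans (Finset.card_le_card fun j hj => ?_)
  simp only [Finset.mem_filter, Finset.mem_univ, true_and] at hj ⊢
  have := (le_abs_self _).trans ((Real.dist_eq _ _).symm.le.trans (dist_le_pi_dist w w' j))
  linarith

lemma eventually_exists_active_eq_rthMax {X : Type*} [TopologicalSpace X] (hr : 1 ≤ r)
    (hrp : r ≤ p) {g : Fin p → X → ℝ} {s : X} (hg : ∀ j, ContinuousAt (g j) s) :
    ∀ᶠ z in 𝓝 s, ∃ j, g j s = rthMax r (fun i => g i s) ∧ g j z = rthMax r (fun i => g i z) := by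
  have hcont : ContinuousAt (fun z => rthMax r fun i => g i z) s :=
    (lipschitzWith_rthMax hr hrp).continuous.continuousAt.comp (continuousAt_pi.mpr hg)
  have hinactive : ∀ᶠ z in 𝓝 s, ∀ j, g j s ≠ rthMax r (fun i => g i s) →
      g j z ≠ rthMax r (fun i => g i z) := by
    refine eventually_all.mpr fun j => ?_
    by_cases hj : g j s = rthMax r (fun i => g i s)
    · exact Eventually.of_forall fun _ h => absurd hj h
    · exact ((hg j).sub hcont).eventually_ne (sub_ne_zero.mpr hj) |>.mono
        fun z hz _ => sub_ne_zero.mp hz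
  filter_upwards [hinactive] with z hz
  obtain ⟨j, hj⟩ := exists_eq_rthMax hr hrp fun i => g i z
  exact ⟨j, not_not.mp fun h => hz j h hj, hj⟩

lemma eventually_lt_slope_rthMax (hr : 1 ≤ r) (hrp : r ≤ p) {g : Fin p → ℝ → ℝ}
    {s c b : ℝ} (hg : ∀ j, DifferentiableAt ℝ (g j) s)
    (hc : ∀ j, g j s = rthMax r (fun i => g i s) → c ≤ deriv (g j) s) (hb : b < c) :
    ∀ᶠ z in 𝓝[≠] s, b < slope (fun t => rthMax r fun i => g i t) s z := by
  have hactive : ∀ᶠ z in 𝓝[≠] s, ∀ j, g j s = rthMax r (fun i => g i s) → b < slope (g j) s z :=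
    eventually_all.mpr fun j => eventually_imp_distrib_left.mpr fun hj =>
      (hasDerivAt_iff_tendsto_slope.mp (hg j).hasDerivAt).eventually_const_lt (hb.trans_le (hc j hj))
  filter_upwards [hactive, nhdsWithin_le_nhds (eventually_exists_active_eq_rthMax hr hrp
    fun j => (hg j).continuousAt)] with z hslope ⟨j, hjs, hjz⟩
  rw [slope_def_field, ← hjs, ← hjz, ← slope_def_field]
  exact hslope j hjs

theorem rthMax_nonneg_of_barrier (hr : 1 ≤ r) (hrp : r ≤ p) {g : Fin p → ℝ → ℝ}
    {α : ℝ → ℝ} {a b : ℝ} (hα : ∀ y < 0, α y < 0)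
    (hg : ∀ j, ∀ t ∈ Icc a b, DifferentiableAt ℝ (g j) t)
    (hbarrier : ∀ j, ∀ t ∈ Ico a b, g j t = rthMax r (fun i => g i t) → -α (g j t) ≤ deriv (g j) t)
    (ha : 0 ≤ rthMax r fun i => g i a) :
    ∀ t ∈ Icc a b, 0 ≤ rthMax r fun i => g i t := by
  refine nonneg_of_liminf_slope_right_ge_neg hα ?_ ha fun s hs c hc => ?_
  · exact fun t ht => (lipschitzWith_rthMax hr hrp).continuous.continuousAt.comp_continuousWithinAt
      (continuousWithinAt_pi.mpr fun j => (hg j t ht).continuousAt.continuousWithinAt)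
  · refine (eventually_lt_slope_rthMax hr hrp (fun j => hg j s (Ico_subset_Icc_self hs))
      (fun j hj => ?_) hc).filter_mono (nhdsGT_le_nhdsNE s)
    simpa [hj] using hbarrier j s hs hj

end rthMax

theorem timevarying_combinatorial_invariance_general {n p : ℕ}
    (T : ℝ)
    (V : Fin p → EuclideanSpace ℝ (Fin n) × ℝ → ℝ)
    (hV : ∀ j, ContDiff ℝ 1 (V j))
    (r : ℕ) (hr1 : 1 ≤ r) (hrp : r ≤ p)
    (α : ℝ → ℝ) (hα : IsClassKe α)
    (θ : ℝ → ℝ)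
    (ρ : ℝ → ℝ) (hρ : IsPosDef ρ)
    (τ₂ : ℝ → ℝ) (hτ₂ : ∀ t ∈ Set.Icc 0 T, DifferentiableAt ℝ τ₂ t)
    (x : ℝ → EuclideanSpace ℝ (Fin n))
    (hx : ∀ t ∈ Set.Icc 0 T, DifferentiableAt ℝ x t)
    (hineq : ∀ j : Fin p, ∀ t ∈ Set.Icc 0 T,
      deriv (fun u => V j (x u, τ₂ u)) t ≥
        -α (V j (x t, τ₂ t)) -
          θ t * ρ (V j (x t, τ₂ t) - rthMax r (fun i => V i (x t, τ₂ t))))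
    (h0 : r ≤ (Finset.univ.filter (fun j : Fin p => 0 ≤ V j (x 0, τ₂ 0))).card) :
    ∀ t ∈ Set.Icc 0 T,
      r ≤ (Finset.univ.filter (fun j : Fin p => 0 ≤ V j (x t, τ₂ t))).card := by
  have hα_neg : ∀ y < 0, α y < 0 := fun y hy => hα.2.2 ▸ hα.2.1 hy
  have hdiff : ∀ j, ∀ t ∈ Icc 0 T, DifferentiableAt ℝ (fun u => V j (x u, τ₂ u)) t :=
    fun j t ht => ((hV j).differentiable one_ne_zero).differentiableAt.comp t
      ((hx t ht).prodMk (hτ₂ t ht))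
  have hbarrier : ∀ j, ∀ t ∈ Ico 0 T, V j (x t, τ₂ t) = rthMax r (fun i => V i (x t, τ₂ t)) →
      -α (V j (x t, τ₂ t)) ≤ deriv (fun u => V j (x u, τ₂ u)) t := fun j t ht hpivot => by
    simpa [hpivot, hρ.2.1] using hineq j t (Ico_subset_Icc_self ht)
  intro t ht
  exact (le_rthMax_iff hr1 hrp _).mp <| rthMax_nonneg_of_barrier hr1 hrp hα_neg hdiff hbarrier
    ((le_rthMax_iff hr1 hrp _).mpr h0) t ht

/-- Time-varying combinatorial invariance (proof of Proposition 2): along a trajectory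
satisfying the combinatorial barrier inequalities for the time-varying reach-avoid value
functions `V_j(x(t), τ₂(t))` with pivot `h̃ = max^{(r)}_j V_j`, at least `r` of the values
remain nonnegative on `[0,T]` whenever at least `r` are nonnegative initially. -/
theorem timevarying_combinatorial_invariance {n p : ℕ}
    (T : ℝ) (hT : 0 < T)
    (V : Fin p → EuclideanSpace ℝ (Fin n) × ℝ → ℝ)
    (hV : ∀ j, ContDiff ℝ 1 (V j))
    (r : ℕ) (hr1 : 1 ≤ r) (hrp : r ≤ p)
    (α : ℝ → ℝ) (hα : IsClassKe α) (hαlip : LocallyLipschitz α)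
    (θ : ℝ → ℝ) (hθ : ContinuousOn θ (Set.Icc 0 T)) (hθ0 : ∀ t ∈ Set.Icc 0 T, 0 ≤ θ t)
    (ρ : ℝ → ℝ) (hρc : Continuous ρ) (hρ : IsPosDef ρ)
    (τ₂ : ℝ → ℝ) (hτ₂ : ∀ t ∈ Set.Icc 0 T, DifferentiableAt ℝ τ₂ t)
    (x : ℝ → EuclideanSpace ℝ (Fin n))
    (hx : ∀ t ∈ Set.Icc 0 T, DifferentiableAt ℝ x t)
    (hineq : ∀ j : Fin p, ∀ t ∈ Set.Icc 0 T,
      deriv (fun u => V j (x u, τ₂ u)) t ≥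
        -α (V j (x t, τ₂ t)) -
          θ t * ρ (V j (x t, τ₂ t) - rthMax r (fun i => V i (x t, τ₂ t))))
    (h0 : r ≤ (Finset.univ.filter (fun j : Fin p => 0 ≤ V j (x 0, τ₂ 0))).card) :
    ∀ t ∈ Set.Icc 0 T,
      r ≤ (Finset.univ.filter (fun j : Fin p => 0 ≤ V j (x t, τ₂ t))).card :=
  timevarying_combinatorial_invariance_general T V hV r hr1 hrp α hα θ ρ hρ τ₂ hτ₂ x hx hineq h0
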